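/- Let G be a finite connected simple graph and x ≠ y vertices. Partition the neighborhood of y as Γ_x^+(y) = {v ~ y : d(x,v) = d(x,y)+1}, Γ_x^0(y) = {v ~ y : d(x,v) = d(x,y)}, Γ_x^-(y) = {v ~ y : d(x,v) = d(x,y)−1}. Then κ_LLY(x,y) ≤ (1 + (|Γ_x^-(y)| − |Γ_x^+(y)|)/deg(y)) / d(x,y). -/

import Mathlib

open Finset

/-- A probability measure on a finite set, given as a density. -/
def IsProbMeasure {V : Type*} [Fintype V] (m : V → ℝ) : Prop :=
  (∀ x, 0 ≤ m x) ∧ ∑ x, m x = 1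

/-- A coupling between two probability measures on a finite set. -/
def IsCoupling {V : Type*} [Fintype V] (A : V × V → ℝ) (m₁ m₂ : V → ℝ) : Prop :=
  (∀ p, 0 ≤ A p) ∧ (∀ x, ∑ y, A (x, y) = m₁ x) ∧ (∀ y, ∑ x, A (x, y) = m₂ y)

/-- The Wasserstein-1 (transportation) distance between two probability measures on a
finite set, with respect to a cost `d`. -/
noncomputable def W {V : Type*} [Fintype V] (d : V → V → ℝ) (m₁ m₂ : V → ℝ) : ℝ :=
  sInf {c | ∃ A, IsCoupling A m₁ m₂ ∧ c = ∑ p : V × V, A p * d p.1 p.2}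

lemma W_symm {V : Type*} [Fintype V] (d : V → V → ℝ) (hd : ∀ x y, d x y = d y x)
    (m₁ m₂ : V → ℝ) : W d m₁ m₂ = W d m₂ m₁ := by
  have key : ∀ m₁ m₂ : V → ℝ,
      {c | ∃ A, IsCoupling A m₁ m₂ ∧ c = ∑ p : V × V, A p * d p.1 p.2} ⊆
      {c | ∃ A, IsCoupling A m₂ m₁ ∧ c = ∑ p : V × V, A p * d p.1 p.2} := by
    rintro m₁ m₂ c ⟨A, ⟨h0, h1, h2⟩, rfl⟩
    refine ⟨fun p => A (p.2, p.1), ⟨fun p => h0 _, fun x => h2 x, fun y => h1 y⟩, ?_⟩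
    refine Fintype.sum_equiv (Equiv.prodComm V V) _ _ ?_
    intro p
    simp [Equiv.prodComm, hd p.1 p.2]
  unfold W
  congr 1
  exact Set.Subset.antisymm (key m₁ m₂) (key m₂ m₁)

/-- The `α`-lazy random walk measure at a vertex `x` of a graph. -/
noncomputable def lazyWalk {V : Type*} [Fintype V] [DecidableEq V] (G : SimpleGraph V)
    [DecidableRel G.Adj] (α : ℝ) (x : V) : V → ℝ :=
  fun v => if v = x then α else if G.Adj x v then (1 - α) / (G.degree x) else 0

/-- The `α`-Ricci curvature `κ_α(x,y) = 1 - W(m_x^α, m_y^α)/d(x,y)`. -/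
noncomputable def kappaAlpha {V : Type*} [Fintype V] [DecidableEq V] (G : SimpleGraph V)
    [DecidableRel G.Adj] (α : ℝ) (x y : V) : ℝ :=
  1 - W (fun a b => (G.dist a b : ℝ)) (lazyWalk G α x) (lazyWalk G α y) / (G.dist x y)

lemma kappaAlpha_symm {V : Type*} [Fintype V] [DecidableEq V] (G : SimpleGraph V)
    [DecidableRel G.Adj] (α : ℝ) (x y : V) :
    kappaAlpha G α x y = kappaAlpha G α y x := by
  unfold kappaAlpha
  rw [W_symm _ (fun a b => by rw [SimpleGraph.dist_comm]),
    SimpleGraph.dist_comm]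

/-- The Lin–Lu–Yau Ricci curvature `κ_LLY(x,y) = lim_{α → 1⁻} κ_α(x,y)/(1-α)`. -/
noncomputable def kappaLLY {V : Type*} [Fintype V] [DecidableEq V] (G : SimpleGraph V)
    [DecidableRel G.Adj] (x y : V) : ℝ :=
  Filter.limUnder (nhdsWithin 1 (Set.Ico (0:ℝ) 1)) (fun α => kappaAlpha G α x y / (1 - α))

lemma kappaLLY_symm {V : Type*} [Fintype V] [DecidableEq V] (G : SimpleGraph V)
    [DecidableRel G.Adj] (x y : V) : kappaLLY G x y = kappaLLY G y x := by
  unfold kappaLLY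
  congr 1
  funext α
  rw [kappaAlpha_symm]

/-- Integral `α`-Ricci curvature `I^α_{κ₀}`: total amount of `α`-Ricci curvature below the
threshold `(1-α)κ₀`, summed over the edges of `G`. -/
noncomputable def IAlpha {V : Type*} [Fintype V] [DecidableEq V] (G : SimpleGraph V)
    [DecidableRel G.Adj] (α κ₀ : ℝ) : ℝ :=
  ∑ e ∈ G.edgeFinset,
    Sym2.lift ⟨fun x y => max 0 ((1 - α) * κ₀ - kappaAlpha G α x y),
      fun x y => by simp only []; rw [kappaAlpha_symm]⟩ e

/-- Integral Lin–Lu–Yau Ricci curvature `I_{κ₀}`: total amount of Lin–Lu–Yau Ricci curvature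
below the threshold `κ₀`, summed over the edges of `G`. -/
noncomputable def ILLY {V : Type*} [Fintype V] [DecidableEq V] (G : SimpleGraph V)
    [DecidableRel G.Adj] (κ₀ : ℝ) : ℝ :=
  ∑ e ∈ G.edgeFinset,
    Sym2.lift ⟨fun x y => max 0 (κ₀ - kappaLLY G x y),
      fun x y => by simp only []; rw [kappaLLY_symm]⟩ e

/-- The diameter of a finite graph. -/
noncomputable def gDiam {V : Type*} [Fintype V] (G : SimpleGraph V) : ℕ :=
  Finset.univ.sup fun p : V × V => G.dist p.1 p.2

/-!
Testing the transport problem against the `1`-Lipschitz function `v ↦ d(x, v)` bounds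
`W(m_x^α, m_y^α)` from below by the difference of the expectations of `d(x, ·)`, which counts the
neighbours of `y` in the three distance layers; this bounds `κ_α(x, y)` by `(1 - α)` times the
right-hand side. The limit defining `κ_LLY` exists because `α ↦ W(m_x^α, m_y^α)` is convex
(couplings can be mixed) and equals `d(x, y)` at `α = 1`, so `κ_α(x, y) / (1 - α)` is a secant
slope of a convex function, hence monotone in `α`.
-/

open Finset SimpleGraph Filter Topology

lemma MonotoneOn.limUnder_nhdsWithin_Ico_le {α β : Type*} [LinearOrder α] [TopologicalSpace α]
    [OrderTopology α] [DenselyOrdered α] [ConditionallyCompleteLinearOrder β] [TopologicalSpace β]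
    [OrderTopology β] {f : α → β} {a b : α} {B : β} (hab : a < b)
    (hf : MonotoneOn f (Set.Ico a b)) (hB : ∀ t ∈ Set.Ico a b, f t ≤ B) :
    limUnder (𝓝[Set.Ico a b] b) f ≤ B := by
  have : (𝓝[<] b).NeBot := nhdsLT_neBot_of_exists_lt ⟨a, hab⟩
  have hlim := (hf.mono Set.Ioo_subset_Ico_self).tendsto_nhdsWithin_Ioo_left
    (Set.nonempty_Ioo.mpr hab)
    ⟨B, Set.forall_mem_image.mpr fun t ht => hB t (Set.Ioo_subset_Ico_self ht)⟩
  rw [← nhdsWithin_Ico_eq_nhdsLT hab] at hlim this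
  rw [hlim.limUnder_eq]
  exact le_of_tendsto hlim (eventually_nhdsWithin_of_forall hB)

section Transport

variable {V : Type*} [Fintype V] {d : V → V → ℝ} {m₁ m₂ n₁ n₂ : V → ℝ} {A B : V × V → ℝ}

lemma isCoupling_prod (h₁ : IsProbMeasure m₁) (h₂ : IsProbMeasure m₂) :
    IsCoupling (fun p => m₁ p.1 * m₂ p.2) m₁ m₂ :=
  ⟨fun p => mul_nonneg (h₁.1 _) (h₂.1 _),
    fun a => by simp only [← mul_sum, h₂.2, mul_one],
    fun b => by simp only [← sum_mul, h₁.2, one_mul]⟩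

lemma IsCoupling.convexComb {t s : ℝ} (hA : IsCoupling A m₁ m₂) (hB : IsCoupling B n₁ n₂)
    (ht : 0 ≤ t) (hs : 0 ≤ s) :
    IsCoupling (t • A + s • B) (t • m₁ + s • n₁) (t • m₂ + s • n₂) := by
  refine ⟨fun p => add_nonneg (mul_nonneg ht (hA.1 p)) (mul_nonneg hs (hB.1 p)),
    fun a => ?_, fun b => ?_⟩
  · simp only [Pi.add_apply, Pi.smul_apply, smul_eq_mul, sum_add_distrib, ← mul_sum,
      hA.2.1, hB.2.1]
  · simp only [Pi.add_apply, Pi.smul_apply, smul_eq_mul, sum_add_distrib, ← mul_sum,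
      hA.2.2, hB.2.2]

lemma W_le_cost (hd : ∀ a b, 0 ≤ d a b) (hA : IsCoupling A m₁ m₂) :
    W d m₁ m₂ ≤ ∑ p, A p * d p.1 p.2 :=
  csInf_le ⟨0, by rintro _ ⟨A, hA, rfl⟩; exact sum_nonneg fun p _ => mul_nonneg (hA.1 p) (hd _ _)⟩
    ⟨A, hA, rfl⟩

lemma couplingCosts_nonempty (h₁ : IsProbMeasure m₁) (h₂ : IsProbMeasure m₂) :
    {c | ∃ A, IsCoupling A m₁ m₂ ∧ c = ∑ p : V × V, A p * d p.1 p.2}.Nonempty :=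
  ⟨_, _, isCoupling_prod h₁ h₂, rfl⟩

/-- The easy half of Kantorovich–Rubinstein duality. -/
lemma sub_le_W_of_lipschitz (h₁ : IsProbMeasure m₁) (h₂ : IsProbMeasure m₂) (f : V → ℝ)
    (hf : ∀ a b, f b - f a ≤ d a b) :
    ∑ v, m₂ v * f v - ∑ v, m₁ v * f v ≤ W d m₁ m₂ := by
  refine le_csInf (couplingCosts_nonempty h₁ h₂) ?_
  rintro _ ⟨A, ⟨hA, hA₁, hA₂⟩, rfl⟩
  have e₁ : ∑ v, m₁ v * f v = ∑ p : V × V, A p * f p.1 := by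
    simp only [Fintype.sum_prod_type, ← hA₁, sum_mul]
  have e₂ : ∑ v, m₂ v * f v = ∑ p : V × V, A p * f p.2 := by
    simp only [Fintype.sum_prod_type_right, ← hA₂, sum_mul]
  rw [e₁, e₂, ← sum_sub_distrib]
  exact sum_le_sum fun p _ => by rw [← mul_sub]; exact mul_le_mul_of_nonneg_left (hf _ _) (hA p)

lemma W_convexComb (hd : ∀ a b, 0 ≤ d a b) (h₁ : IsProbMeasure m₁) (h₂ : IsProbMeasure m₂)
    (h₁' : IsProbMeasure n₁) (h₂' : IsProbMeasure n₂) {t s : ℝ} (ht : 0 ≤ t) (hs : 0 ≤ s)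
    (hts : t + s = 1) :
    W d (t • m₁ + s • n₁) (t • m₂ + s • n₂) ≤ t * W d m₁ m₂ + s * W d n₁ n₂ := by
  refine le_of_forall_pos_le_add fun ε hε => ?_
  obtain ⟨_, ⟨A, hA, rfl⟩, hAε⟩ := Real.lt_sInf_add_pos (couplingCosts_nonempty (d := d) h₁ h₂) hε
  obtain ⟨_, ⟨B, hB, rfl⟩, hBε⟩ := Real.lt_sInf_add_pos (couplingCosts_nonempty (d := d) h₁' h₂') hε
  calc W d (t • m₁ + s • n₁) (t • m₂ + s • n₂)
      ≤ ∑ p, (t • A + s • B) p * d p.1 p.2 := W_le_cost hd (hA.convexComb hB ht hs)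
    _ = t * ∑ p, A p * d p.1 p.2 + s * ∑ p, B p * d p.1 p.2 := by
      simp only [Pi.add_apply, Pi.smul_apply, smul_eq_mul, add_mul, sum_add_distrib, mul_sum,
        mul_assoc]
    _ ≤ t * (W d m₁ m₂ + ε) + s * (W d n₁ n₂ + ε) := by
      gcongr
      exacts [hAε.le, hBε.le]
    _ = t * W d m₁ m₂ + s * W d n₁ n₂ + ε := by linear_combination ε * hts

end Transport

section LazyWalk

variable {V : Type*} [Fintype V] [DecidableEq V] (G : SimpleGraph V) [DecidableRel G.Adj]

lemma lazyWalk_sum_mul (α : ℝ) (x : V) (f : V → ℝ) :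
    ∑ v, lazyWalk G α x v * f v
      = α * f x + (1 - α) / G.degree x * ∑ v ∈ G.neighborFinset x, f v := by
  have hsplit : ∀ v, lazyWalk G α x v * f v
      = (if v = x then α * f x else 0) + if G.Adj x v then (1 - α) / G.degree x * f v else 0 := by
    intro v
    unfold lazyWalk
    by_cases h : v = x
    · subst h; simp
    · simp [h]
  simp only [hsplit, sum_add_distrib, sum_ite_eq', mem_univ, if_true, ← sum_filter,
    ← neighborFinset_eq_filter, mul_sum]

lemma isProbMeasure_lazyWalk {α : ℝ} (hα : α ∈ Set.Icc (0 : ℝ) 1) {x : V}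
    (hx : 0 < G.degree x) : IsProbMeasure (lazyWalk G α x) := by
  refine ⟨fun v => ?_, ?_⟩
  · unfold lazyWalk
    split_ifs
    exacts [hα.1, div_nonneg (by linarith [hα.2]) (Nat.cast_nonneg _), le_rfl]
  · have h := lazyWalk_sum_mul G α x fun _ => 1
    simp only [mul_one, sum_const, card_neighborFinset_eq_degree, nsmul_eq_mul] at h
    rw [h, div_mul_cancel₀ _ (by positivity)]
    ring

lemma lazyWalk_convexComb (a b t s : ℝ) (hts : t + s = 1) (x : V) :
    lazyWalk G (t * a + s * b) x = t • lazyWalk G a x + s • lazyWalk G b x := by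
  funext v
  simp only [Pi.add_apply, Pi.smul_apply, smul_eq_mul]
  unfold lazyWalk
  split_ifs
  · ring
  · rw [← mul_div_assoc, ← mul_div_assoc, ← add_div]
    congr 1
    linear_combination -hts
  · ring

lemma convexOn_W_lazyWalk {d : V → V → ℝ} (hd : ∀ a b, 0 ≤ d a b) {x y : V}
    (hx : 0 < G.degree x) (hy : 0 < G.degree y) :
    ConvexOn ℝ (Set.Icc 0 1) fun α => W d (lazyWalk G α x) (lazyWalk G α y) := by
  refine ⟨convex_Icc 0 1, fun a ha b hb t s ht hs hts => ?_⟩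
  simp only [smul_eq_mul, lazyWalk_convexComb G a b t s hts]
  exact W_convexComb hd (isProbMeasure_lazyWalk G ha hx) (isProbMeasure_lazyWalk G ha hy)
    (isProbMeasure_lazyWalk G hb hx) (isProbMeasure_lazyWalk G hb hy) ht hs hts

lemma W_lazyWalk_one_le {d : V → V → ℝ} (hd : ∀ a b, 0 ≤ d a b) {x y : V}
    (hx : 0 < G.degree x) (hy : 0 < G.degree y) :
    W d (lazyWalk G 1 x) (lazyWalk G 1 y) ≤ d x y := by
  have hprod := isCoupling_prod (isProbMeasure_lazyWalk G ⟨zero_le_one, le_rfl⟩ hx)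
    (isProbMeasure_lazyWalk G ⟨zero_le_one, le_rfl⟩ hy)
  refine (W_le_cost hd hprod).trans_eq ?_
  simp only [Fintype.sum_prod_type, mul_assoc, ← mul_sum, lazyWalk_sum_mul, sub_self, zero_div,
    zero_mul, add_zero, one_mul]

end LazyWalk

section NeighborDistances

variable {V : Type*} [Fintype V] {G : SimpleGraph V} [DecidableRel G.Adj]

lemma sum_neighborFinset_dist_self (x : V) :
    ∑ v ∈ G.neighborFinset x, (G.dist x v : ℝ) = G.degree x := by
  rw [sum_congr rfl fun v hv => by rw [dist_eq_one_iff_adj.mpr ((mem_neighborFinset ..).mp hv)],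
    Nat.cast_one, sum_const, card_neighborFinset_eq_degree, nsmul_one]

lemma sum_neighborFinset_dist {x y : V} (hxy : 0 < G.dist x y) :
    ∑ v ∈ G.neighborFinset y, (G.dist x v : ℝ)
      = G.dist x y * G.degree y
        + #{v ∈ G.neighborFinset y | G.dist x v = G.dist x y + 1}
        - #{v ∈ G.neighborFinset y | G.dist x v = G.dist x y - 1} := by
  have hlayer : ∀ v ∈ G.neighborFinset y, (G.dist x v : ℝ) = G.dist x y
      + ((if G.dist x v = G.dist x y + 1 then 1 else 0)
        - if G.dist x v = G.dist x y - 1 then 1 else 0) := by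
    intro v hv
    rcases ((mem_neighborFinset ..).mp hv).diff_dist_adj (u := x) with h | h | h
    · rw [if_neg (by omega), if_neg (by omega), h]
      ring
    · rw [if_pos h, if_neg (by omega), h]
      push_cast
      ring
    · rw [if_neg (by omega), if_pos h, h, Nat.cast_sub hxy]
      push_cast
      ring
  rw [sum_congr rfl hlayer, sum_add_distrib, sum_sub_distrib, sum_boole, sum_boole, sum_const,
    card_neighborFinset_eq_degree, nsmul_eq_mul]
  ring

end NeighborDistances

section Curvature

variable {V : Type*} [Fintype V] [DecidableEq V] {G : SimpleGraph V} [DecidableRel G.Adj]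

lemma le_W_lazyWalk (hG : G.Connected) {α : ℝ} (hα : α ∈ Set.Icc (0 : ℝ) 1) {x y : V}
    (hx : 0 < G.degree x) (hy : 0 < G.degree y) :
    α * G.dist x y + (1 - α) / G.degree y * ∑ v ∈ G.neighborFinset y, (G.dist x v : ℝ) - (1 - α)
      ≤ W (fun a b => (G.dist a b : ℝ)) (lazyWalk G α x) (lazyWalk G α y) := by
  have hlip : ∀ a b, (G.dist x b : ℝ) - G.dist x a ≤ G.dist a b := fun a b => by
    linarith [show (G.dist x b : ℝ) ≤ G.dist x a + G.dist a b by exact_mod_cast hG.dist_triangle]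
  have h := sub_le_W_of_lipschitz (isProbMeasure_lazyWalk G hα hx)
    (isProbMeasure_lazyWalk G hα hy) _ hlip
  rwa [lazyWalk_sum_mul, lazyWalk_sum_mul, sum_neighborFinset_dist_self, dist_self,
    Nat.cast_zero, mul_zero, zero_add, div_mul_cancel₀ _ (by positivity)] at h

lemma kappaAlpha_le (hG : G.Connected) {α : ℝ} (hα : α ∈ Set.Icc (0 : ℝ) 1) {x y : V}
    (hxy : x ≠ y) :
    kappaAlpha G α x y ≤ (1 - α) *
      ((1 + ((#{v ∈ G.neighborFinset y | G.dist x v = G.dist x y - 1} : ℝ)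
            - #{v ∈ G.neighborFinset y | G.dist x v = G.dist x y + 1}) / G.degree y)
        / G.dist x y) := by
  have hx := (hG.preconnected x y).degree_pos_left hxy
  have hy := (hG.preconnected x y).degree_pos_right hxy
  have hdist := hG.pos_dist_of_ne hxy
  have hd : (G.degree y : ℝ) ≠ 0 := by positivity
  have hn : (0 : ℝ) < G.dist x y := by exact_mod_cast hdist
  have h := le_W_lazyWalk hG hα hx hy
  rw [sum_neighborFinset_dist hdist] at h
  set c := (1 : ℝ) + ((#{v ∈ G.neighborFinset y | G.dist x v = G.dist x y - 1} : ℝ)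
    - #{v ∈ G.neighborFinset y | G.dist x v = G.dist x y + 1}) / G.degree y
  have hW : G.dist x y - (1 - α) * c
      ≤ W (fun a b => (G.dist a b : ℝ)) (lazyWalk G α x) (lazyWalk G α y) := by
    convert h using 1
    simp only [c]
    field_simp
    ring
  unfold kappaAlpha
  calc 1 - W (fun a b => (G.dist a b : ℝ)) (lazyWalk G α x) (lazyWalk G α y) / G.dist x y
      ≤ 1 - (G.dist x y - (1 - α) * c) / G.dist x y := by gcongr
    _ = (1 - α) * (c / G.dist x y) := by field_simp; ring

lemma kappaAlpha_div_eq_slope {x y : V}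
    (h₁ : W (fun a b => (G.dist a b : ℝ)) (lazyWalk G 1 x) (lazyWalk G 1 y) = G.dist x y)
    (hxy : G.dist x y ≠ 0) {α : ℝ} (hα : α ≠ 1) :
    kappaAlpha G α x y / (1 - α)
      = slope (fun α => W (fun a b => (G.dist a b : ℝ)) (lazyWalk G α x) (lazyWalk G α y)) 1 α
        / G.dist x y := by
  have : (1 : ℝ) - α ≠ 0 := sub_ne_zero.mpr hα.symm
  have : α - 1 ≠ 0 := sub_ne_zero.mpr hα
  rw [slope_def_field, h₁]
  unfold kappaAlpha
  field_simp
  ring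

lemma monotoneOn_kappaAlpha_div (hG : G.Connected) {x y : V} (hxy : x ≠ y) :
    MonotoneOn (fun α => kappaAlpha G α x y / (1 - α)) (Set.Ico 0 1) := by
  have hx := (hG.preconnected x y).degree_pos_left hxy
  have hy := (hG.preconnected x y).degree_pos_right hxy
  have hdist := (hG.pos_dist_of_ne hxy).ne'
  have hcost : ∀ a b, (0 : ℝ) ≤ G.dist a b := fun _ _ => Nat.cast_nonneg _
  have hW₁ : W (fun a b => (G.dist a b : ℝ)) (lazyWalk G 1 x) (lazyWalk G 1 y) = G.dist x y :=
    (W_lazyWalk_one_le G hcost hx hy).antisymm <| by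
      simpa using le_W_lazyWalk hG ⟨zero_le_one, le_rfl⟩ hx hy
  intro a ha b hb hab
  simp only [kappaAlpha_div_eq_slope hW₁ hdist ha.2.ne, kappaAlpha_div_eq_slope hW₁ hdist hb.2.ne]
  gcongr
  exact (convexOn_W_lazyWalk G hcost hx hy).slope_mono ⟨zero_le_one, le_rfl⟩
    ⟨⟨ha.1, ha.2.le⟩, ha.2.ne⟩ ⟨⟨hb.1, hb.2.le⟩, hb.2.ne⟩ hab

end Curvature

/-- Lin–Lu–Yau, Lemma 4.4: upper bound on `κ_LLY` via the neighborhood partition of `y`. -/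
theorem stmt_9 {V : Type*} [Fintype V] [DecidableEq V] (G : SimpleGraph V)
    [DecidableRel G.Adj] (hG : G.Connected) (x y : V) (hxy : x ≠ y) :
    kappaLLY G x y ≤
      (1 + ((((G.neighborFinset y).filter (fun v => G.dist x v = G.dist x y - 1)).card : ℝ)
            - (((G.neighborFinset y).filter (fun v => G.dist x v = G.dist x y + 1)).card : ℝ))
          / (G.degree y)) / (G.dist x y) := by
  refine (monotoneOn_kappaAlpha_div hG hxy).limUnder_nhdsWithin_Ico_le zero_lt_one fun α hα => ?_
  rw [div_le_iff₀ (sub_pos.mpr hα.2), mul_comm]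
  exact kappaAlpha_le hG ⟨hα.1, hα.2.le⟩ hxy
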